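/- For each i ∈ I, the idempotent e_i lies in the F-span of the set {c_{st}^λ : λ ∈ Λ, s,t ∈ T(λ,i)}; moreover Λ_i ≠ ∅ for each i ∈ I. -/

import Mathlib

/-!
The map `x ↦ e_i x e_i` sends each basis element `c_{st}^λ` to itself when `s, t ∈ T(λ, i)`
and to `0` otherwise, since every row and (through `*`) every column of the basis is absorbed
by exactly one of the orthogonal idempotents. Hence `e_i = e_i 1 e_i` lies in the span of those
basis elements, and that span is nonzero because `e_i ≠ 0`.
-/

open scoped Classical

noncomputable section


/-- A cellular algebra over a field `F`, in the sense of Graham–Lehrer: an associative unital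
`F`-algebra `A` together with a finite poset `Λ`, finite nonempty index sets `T l`, a basis
`c l s t` indexed by triples, an `F`-linear anti-automorphism `star` fixing the basis up to
transposition, and structure coefficients `r` satisfying the cellular multiplication rule
modulo the span `A^{>l}` of higher basis elements. -/
structure CellularAlgebra (F : Type*) [Field F] (A : Type*) [Ring A] [Algebra F A]
    (Λ : Type*) [PartialOrder Λ] [Fintype Λ]
    (T : Λ → Type*) [∀ l, Fintype (T l)] [∀ l, Nonempty (T l)] where
  c : (l : Λ) → T l → T l → A
  basis : Module.Basis ((l : Λ) × (T l × T l)) F A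
  basis_eq : ∀ (l : Λ) (s t : T l), basis ⟨l, (s, t)⟩ = c l s t
  star : A →ₗ[F] A
  star_mul : ∀ a b : A, star (a * b) = star b * star a
  star_star : ∀ a : A, star (star a) = a
  star_c : ∀ (l : Λ) (s t : T l), star (c l s t) = c l t s
  r : A → (l : Λ) → T l → T l → F
  cell_mem : ∀ (a : A) (l : Λ) (s t : T l),
    a * c l s t - ∑ u : T l, r a l u s • c l u t ∈
      Submodule.span F {x : A | ∃ μ : Λ, l < μ ∧ ∃ p q : T μ, x = c μ p q}

namespace CellularAlgebra

variable {F : Type*} [Field F] {A : Type*} [Ring A] [Algebra F A]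
  {Λ : Type*} [PartialOrder Λ] [Fintype Λ]
  {T : Λ → Type*} [∀ l, Fintype (T l)] [∀ l, Nonempty (T l)]
  (cd : CellularAlgebra F A Λ T)

/-- The ideal-like subspace `A^{>l}`, the `F`-span of all basis elements of strictly
higher degree. -/
def spanAbove (l : Λ) : Submodule F A :=
  Submodule.span F {x : A | ∃ μ : Λ, l < μ ∧ ∃ p q : T μ, x = cd.c μ p q}

variable {I : Type*} [Fintype I] (e : I → A)

/-- Assumptions (A1)–(A4): a decomposition of `1` into nonzero pairwise orthogonal
idempotents `e i`, fixed by `star`, such that each basis row is absorbed by some `e i`. -/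
structure Decomp : Prop where
  ne_zero : ∀ i, e i ≠ 0
  idem : ∀ i, e i * e i = e i
  orth : ∀ i j, i ≠ j → e i * e j = 0
  sum_eq_one : ∑ i, e i = 1
  star_fix : ∀ i, cd.star (e i) = e i
  exists_idx : ∀ (l : Λ) (t : T l), ∃ i : I, ∀ s : T l, e i * cd.c l t s = cd.c l t s

/-- `T(λ, i)`. -/
def Tset (i : I) (l : Λ) : Set (T l) :=
  {t : T l | ∀ s : T l, e i * cd.c l t s = cd.c l t s}

/-- `Λ_i`. -/
def LambdaSet (i : I) : Set Λ := {l : Λ | (cd.Tset e i l).Nonempty}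

/-- `I_λ`. -/
def Iset (l : Λ) : Set I := {i : I | l ∈ cd.LambdaSet e i}

def cornerSpan (i : I) : Submodule F A :=
  Submodule.span F {x : A | ∃ (l : Λ) (s t : T l),
        s ∈ cd.Tset e i l ∧ t ∈ cd.Tset e i l ∧ x = cd.c l s t}

variable {cd e}

theorem e_mul_c (hd : cd.Decomp e) (i : I) (l : Λ) (s t : T l) :
    e i * cd.c l s t = if s ∈ cd.Tset e i l then cd.c l s t else 0 := by
  split_ifs with hs
  · exact hs t
  · obtain ⟨j, hj⟩ := hd.exists_idx l s
    have hji : j ≠ i := by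
      rintro rfl
      exact hs hj
    rw [← hj t, ← mul_assoc, hd.orth i j hji.symm, zero_mul]

theorem c_mul_e (hd : cd.Decomp e) (i : I) (l : Λ) (s t : T l) :
    cd.c l s t * e i = if t ∈ cd.Tset e i l then cd.c l s t else 0 := by
  have h : cd.c l s t * e i = cd.star (e i * cd.c l t s) := by
    rw [cd.star_mul, hd.star_fix, cd.star_c]
  rw [h, e_mul_c hd]
  split_ifs
  · exact cd.star_c l t s
  · exact map_zero cd.star

theorem e_mul_mul_e_mem_cornerSpan (hd : cd.Decomp e) (i : I) (a : A) :
    e i * a * e i ∈ cd.cornerSpan e i := by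
  have ha : a ∈ Submodule.span F (Set.range cd.basis) := by
    rw [cd.basis.span_eq]
    trivial
  induction ha using Submodule.span_induction with
  | mem x hx =>
    obtain ⟨⟨l, s, t⟩, rfl⟩ := hx
    rw [cd.basis_eq, e_mul_c hd]
    split_ifs with hs
    · rw [c_mul_e hd]
      split_ifs with ht
      · exact Submodule.subset_span ⟨l, s, t, hs, ht, rfl⟩
      · exact Submodule.zero_mem _
    · rw [zero_mul]
      exact Submodule.zero_mem _
  | zero => simp
  | add x y _ _ hx hy => simpa [mul_add, add_mul] using Submodule.add_mem _ hx hy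
  | smul r x _ hx => simpa using Submodule.smul_mem _ r hx

/-- each idempotent `e i` lies in the span of the basis elements
`c_{st}^λ` with `s, t ∈ T(λ, i)`; moreover `Λ_i` is nonempty. -/
theorem statement_5 (hd : cd.Decomp e) (i : I) :
    e i ∈ Submodule.span F {x : A | ∃ (l : Λ) (s t : T l),
        s ∈ cd.Tset e i l ∧ t ∈ cd.Tset e i l ∧ x = cd.c l s t} ∧
    (cd.LambdaSet e i).Nonempty := by
  have he : e i ∈ cd.cornerSpan e i := by
    simpa [hd.idem] using e_mul_mul_e_mem_cornerSpan hd i 1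
  refine ⟨he, ?_⟩
  have hbot : cd.cornerSpan e i ≠ ⊥ := fun h => hd.ne_zero i (by simpa [h] using he)
  simp only [cornerSpan, ne_eq, Submodule.span_eq_bot, not_forall] at hbot
  obtain ⟨-, ⟨l, s, -, hs, -, rfl⟩, -⟩ := hbot
  exact ⟨l, s, hs⟩

end CellularAlgebra
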